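/- Let ψ ∈ H^∞ be not identically zero and let T be an algebra automorphism (bijective, ℂ-linear, multiplicative self-map) of ψH^∞. Then T(ψ) = ψ·g for some invertible element g of H^∞, i.e., some g ∈ H^∞ for which there exists h ∈ H^∞ with g·h ≡ 1 on 𝔻. -/

import Mathlib

open Complex Metric Set

local notation "𝔻" => Complex.UnitDisc

/-- The closed unit disc, as a subset of `ℂ`. -/
def cD : Set ℂ := Metric.closedBall 0 1

/-- A function on the open unit disc is analytic (holomorphic):
it is the restriction of a function differentiable on the open unit ball. -/
def HolOn (f : 𝔻 → ℂ) : Prop :=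
  ∃ F : ℂ → ℂ, DifferentiableOn ℂ F (Metric.ball 0 1) ∧ ∀ z : 𝔻, F ↑z = f z

/-- Membership in `H^∞`, the algebra of bounded analytic functions on the unit disc. -/
def MemHinf (f : 𝔻 → ℂ) : Prop :=
  HolOn f ∧ ∃ M : ℝ, ∀ z : 𝔻, ‖f z‖ ≤ M

/-- Membership in the disc algebra `A(𝔻)`: continuous on the closed unit disc,
analytic in its interior. -/
def MemDiscAlg (f : ↥cD → ℂ) : Prop :=
  ∃ F : ℂ → ℂ, ContinuousOn F cD ∧ DifferentiableOn ℂ F (Metric.ball 0 1) ∧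
    ∀ z : ↥cD, F ↑z = f z

/-- `φ ∈ Aut(𝔻)`: a bijective analytic self-map of the unit disc. -/
def IsDiscAut (φ : 𝔻 → 𝔻) : Prop :=
  (∃ F : ℂ → ℂ, DifferentiableOn ℂ F (Metric.ball 0 1) ∧ ∀ z : 𝔻, F ↑z = ↑(φ z)) ∧
  Function.Bijective φ

/-- A Möbius automorphism of the unit disc, given by its global formula
`Φ z = η (a - z) / (1 - conj a * z)` with `|a| < 1`, `|η| = 1`; this is the analytic
extension to (a neighbourhood of) the closed unit disc of a disc automorphism. -/
def IsMobius (Φ : ℂ → ℂ) : Prop :=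
  ∃ a η : ℂ, ‖a‖ < 1 ∧ ‖η‖ = 1 ∧
    ∀ z : ℂ, Φ z = η * (a - z) / (1 - (starRingEnd ℂ) a * z)

/-- `T` is an algebra automorphism of the set `A` of complex-valued functions:
a bijective, `ℂ`-linear and multiplicative self-map of `A`. -/
def IsAlgAutOn {ι : Type} (A : Set (ι → ℂ)) (T : (ι → ℂ) → (ι → ℂ)) : Prop :=
  (∀ f ∈ A, T f ∈ A) ∧
  (∀ f ∈ A, ∀ g ∈ A, T (f + g) = T f + T g) ∧
  (∀ (c : ℂ), ∀ f ∈ A, T (c • f) = c • T f) ∧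
  (∀ f ∈ A, ∀ g ∈ A, T (f * g) = T f * T g) ∧
  Set.InjOn T A ∧ Set.SurjOn T A A

/-- The subalgebra `ψ H^∞ = {ψ · g : g ∈ H^∞}`. -/
def psiH (ψ : 𝔻 → ℂ) : Set (𝔻 → ℂ) :=
  {f | ∃ g, MemHinf g ∧ f = fun z => ψ z * g z}

/-- The subalgebra `ψ A(𝔻) = {ψ · g : g ∈ A(𝔻)}`. -/
def psiA (ψ : ↥cD → ℂ) : Set (↥cD → ℂ) :=
  {f | ∃ g, MemDiscAlg g ∧ f = fun z => ψ z * g z}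

/-- The composition operator `C_φ : f ↦ f ∘ φ` is a well-defined algebra automorphism
of the set `A` (it is automatically linear and multiplicative). -/
def CompAutOn (A : Set (𝔻 → ℂ)) (φ : 𝔻 → 𝔻) : Prop :=
  (∀ f ∈ A, f ∘ φ ∈ A) ∧ Set.InjOn (fun f => f ∘ φ) A ∧ Set.SurjOn (fun f => f ∘ φ) A A

/-- The Möbius factor `τ_a(z) = (a - z)/(1 - conj a · z)`. -/
noncomputable def mobius (a z : ℂ) : ℂ := (a - z) / (1 - (starRingEnd ℂ) a * z)

/-- `f` has a zero of order (multiplicity) `k` at `w`: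
`f z = (z - w)^k g z` with `g` analytic and `g w ≠ 0`. -/
def ZeroOrderAt (f : 𝔻 → ℂ) (w : 𝔻) (k : ℕ) : Prop :=
  ∃ g : 𝔻 → ℂ, HolOn g ∧ g w ≠ 0 ∧ ∀ z : 𝔻, f z = ((z : ℂ) - (w : ℂ)) ^ k * g z

/-- `g` is an invertible element of `H^∞`. -/
def InvHinf (g : 𝔻 → ℂ) : Prop :=
  MemHinf g ∧ ∃ h : 𝔻 → ℂ, MemHinf h ∧ ∀ z, g z * h z = 1

/-- `g` is an invertible element of the disc algebra `A(𝔻)`. -/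
def InvDiscAlg (g : ↥cD → ℂ) : Prop :=
  MemDiscAlg g ∧ ∃ h : ↥cD → ℂ, MemDiscAlg h ∧ ∀ z, g z * h z = 1

/-! Writing `ψ = T (ψ k)` and `T ψ = ψ g`, the identity `ψ · ψ k² = (ψ k)²` gives
`T ψ · T (ψ k²) = ψ²`, i.e. `ψ² g r = ψ²` with `T (ψ k²) = ψ r`. Hence `g r = 1` off the zero set
of `ψ`, which has empty interior, and so everywhere by the identity theorem. -/

lemma holOn_const (c : ℂ) : HolOn fun _ => c :=
  ⟨fun _ => c, differentiableOn_const c, fun _ => rfl⟩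

lemma HolOn.mul {f g : 𝔻 → ℂ} (hf : HolOn f) (hg : HolOn g) : HolOn fun z => f z * g z := by
  obtain ⟨F, hF, hFf⟩ := hf
  obtain ⟨G, hG, hGg⟩ := hg
  exact ⟨fun z => F z * G z, hF.mul hG, fun z => by simp only [hFf, hGg]⟩

lemma HolOn.eq_of_eq_of_ne_zero {f g ψ : 𝔻 → ℂ} (hf : HolOn f) (hg : HolOn g) (hψ : HolOn ψ)
    (hne : ∃ z, ψ z ≠ 0) (hfg : ∀ z, ψ z ≠ 0 → f z = g z) : f = g := by
  obtain ⟨F, hF, hFf⟩ := hf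
  obtain ⟨G, hG, hGg⟩ := hg
  obtain ⟨Ψ, hΨ, hΨψ⟩ := hψ
  obtain ⟨z₀, hz₀⟩ := hne
  have hz₀_mem : (z₀ : ℂ) ∈ ball (0 : ℂ) 1 := mem_ball_zero_iff.2 z₀.norm_lt_one
  have hΨ_cont : ContinuousAt Ψ z₀ :=
    (hΨ.differentiableAt (isOpen_ball.mem_nhds hz₀_mem)).continuousAt
  have hFG_near : F =ᶠ[nhds (z₀ : ℂ)] G := by
    filter_upwards [hΨ_cont.eventually_ne (by rwa [hΨψ]), isOpen_ball.eventually_mem hz₀_mem]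
      with z hΨz hz
    have hψz := hΨψ (UnitDisc.mk z (mem_ball_zero_iff.1 hz))
    have hfgz := hfg (UnitDisc.mk z (mem_ball_zero_iff.1 hz)) (hψz ▸ hΨz)
    rwa [← hFf, ← hGg] at hfgz
  have hFG : EqOn F G (ball (0 : ℂ) 1) :=
    (hF.analyticOnNhd isOpen_ball).eqOn_of_preconnected_of_eventuallyEq
      (hG.analyticOnNhd isOpen_ball) (convex_ball (0 : ℂ) 1).isPreconnected hz₀_mem hFG_near
  funext z
  rw [← hFf, ← hGg]
  exact hFG (mem_ball_zero_iff.2 z.norm_lt_one)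

lemma MemHinf.mul {f g : 𝔻 → ℂ} (hf : MemHinf f) (hg : MemHinf g) :
    MemHinf fun z => f z * g z := by
  obtain ⟨hf, M, hM⟩ := hf
  obtain ⟨hg, N, hN⟩ := hg
  refine ⟨hf.mul hg, max M 0 * max N 0, fun z => ?_⟩
  rw [norm_mul]
  exact mul_le_mul ((hM z).trans (le_max_left _ _)) ((hN z).trans (le_max_left _ _))
    (norm_nonneg _) (le_max_right _ _)

lemma memHinf_const (c : ℂ) : MemHinf fun _ => c :=
  ⟨holOn_const c, ‖c‖, fun _ => le_rfl⟩

lemma self_mem_psiH (ψ : 𝔻 → ℂ) : ψ ∈ psiH ψ :=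
  ⟨fun _ => 1, memHinf_const 1, by simp only [mul_one]⟩

lemma exists_mul_eq_mul_self_of_surjOn {ψ : 𝔻 → ℂ} {T : (𝔻 → ℂ) → (𝔻 → ℂ)}
    (hmap : ∀ f ∈ psiH ψ, T f ∈ psiH ψ) (hmul : ∀ f ∈ psiH ψ, ∀ g ∈ psiH ψ, T (f * g) = T f * T g)
    (hsurj : SurjOn T (psiH ψ) (psiH ψ)) : ∃ v ∈ psiH ψ, T ψ * v = ψ * ψ := by
  obtain ⟨w, hw, hTw⟩ := hsurj (self_mem_psiH ψ)
  obtain ⟨k, hk, rfl⟩ := hw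
  have hu : (fun z => ψ z * (k z * k z)) ∈ psiH ψ := ⟨_, hk.mul hk, rfl⟩
  refine ⟨_, hmap _ hu, ?_⟩
  have hsq : ψ * (fun z => ψ z * (k z * k z)) = (fun z => ψ z * k z) * fun z => ψ z * k z := by
    funext z
    simp only [Pi.mul_apply]
    ring
  calc T ψ * T (fun z => ψ z * (k z * k z))
      = T ((fun z => ψ z * k z) * fun z => ψ z * k z) := by
        rw [← hmul _ (self_mem_psiH ψ) _ hu, hsq]
    _ = ψ * ψ := by rw [hmul _ ⟨k, hk, rfl⟩ _ ⟨k, hk, rfl⟩, hTw]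

/-- if `ψ ∈ H^∞` is not identically zero and `T` is an algebra automorphism
of `ψ H^∞`, then `T ψ = ψ · g` for some invertible element `g` of `H^∞`. -/
theorem stmt_8 (ψ : 𝔻 → ℂ) (hψ : MemHinf ψ) (hne : ∃ z, ψ z ≠ 0)
    (T : (𝔻 → ℂ) → (𝔻 → ℂ)) (hT : IsAlgAutOn (psiH ψ) T) :
    ∃ g : 𝔻 → ℂ, InvHinf g ∧ T ψ = fun z => ψ z * g z := by
  obtain ⟨hmap, -, -, hmul, -, hsurj⟩ := hT
  obtain ⟨g, hg, hTψ⟩ := hmap ψ (self_mem_psiH ψ)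
  obtain ⟨_, ⟨r, hr, rfl⟩, hgr⟩ := exists_mul_eq_mul_self_of_surjOn hmap hmul hsurj
  have hgr_off : ∀ z, ψ z ≠ 0 → g z * r z = 1 := fun z hz => by
    have := congrFun hgr z
    simp only [hTψ, Pi.mul_apply] at this
    exact mul_left_cancel₀ (mul_ne_zero hz hz) (by linear_combination this)
  have hgr_one := hg.1.mul hr.1 |>.eq_of_eq_of_ne_zero (holOn_const 1) hψ.1 hne hgr_off
  exact ⟨g, ⟨hg, r, hr, congrFun hgr_one⟩, hTψ⟩
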